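/- Let A, B ∈ GL(d, ℝ) be expansive matrices whose step homogeneous quasi-norms ρ_A, ρ_B are equivalent, and let Q, P ⊆ ℝ^d be open sets whose closures are compact subsets of ℝ^d \ {0}. Then there exists C > 0 such that for all i, j ∈ ℤ with A^i Q ∩ B^j P ≠ ∅, one has (1/C)·|det B|^j ≤ |det A|^i ≤ C·|det B|^j. -/

import Mathlib

open MeasureTheory
open scoped Pointwise

/-- A real matrix is expansive if it is invertible and all its complex eigenvalues
have absolute value strictly greater than `1`. -/
def Expansive {d : ℕ} (A : Matrix (Fin d) (Fin d) ℝ) : Prop :=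
  IsUnit A ∧ ∀ μ ∈ spectrum ℂ (A.map (algebraMap ℝ ℂ)), 1 < ‖μ‖

/-- The action of a matrix on Euclidean space. -/
def ms {d : ℕ} (A : Matrix (Fin d) (Fin d) ℝ) (x : EuclideanSpace ℝ (Fin d)) :
    EuclideanSpace ℝ (Fin d) := WithLp.toLp 2 (A.mulVec x)

/-- An ellipsoid of volume one satisfying `Ω ⊆ rΩ ⊆ AΩ` for some `r > 1`. -/
def IsExpansiveEllipsoid {d : ℕ} (A : Matrix (Fin d) (Fin d) ℝ)
    (Ω : Set (EuclideanSpace ℝ (Fin d))) : Prop :=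
  (∃ P : Matrix (Fin d) (Fin d) ℝ, IsUnit P ∧ Ω = {x | ‖ms P x‖ < 1}) ∧
    volume Ω = 1 ∧ ∃ r : ℝ, 1 < r ∧ Ω ⊆ r • Ω ∧ r • Ω ⊆ ms A '' Ω

/-- The step homogeneous quasi-norm of `A` associated to the ellipsoid `Ω`:
`ρ x = |det A| ^ i` for `x ∈ A^{i+1} Ω \ A^i Ω`, and `ρ 0 = 0`. -/
def IsStepQuasiNorm {d : ℕ} (A : Matrix (Fin d) (Fin d) ℝ)
    (Ω : Set (EuclideanSpace ℝ (Fin d))) (ρ : EuclideanSpace ℝ (Fin d) → ℝ) : Prop :=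
  ρ 0 = 0 ∧ ∀ i : ℤ, ∀ x ∈ ms (A ^ (i + 1)) '' Ω \ ms (A ^ i) '' Ω, ρ x = |A.det| ^ i

/-!
Every step quasi-norm is comparable to `|det A| ^ i` on `A^i K` for a bounded set `K` that stays
away from `0`, uniformly in `i`: sandwiching `K` between two dilates `A^{-M} Ω` and `A^N Ω` of the
ellipsoid puts each point of `K` in one of finitely many shells `A^{k+1} Ω \ A^k Ω`, and `A^i` moves
that shell to the shell `k + i`, where the quasi-norm is `|det A|^(i+k)`. A point of
`A^i Q ∩ B^j P` therefore has `ρ_A`-value `≍ |det A|^i` and `ρ_B`-value `≍ |det B|^j`, and these are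
equivalent.
-/

open Topology Bornology Set

lemma exists_subset_pow_smul {𝕜 E : Type*} [NontriviallyNormedField 𝕜]
    [NormedAddCommGroup E] [NormedSpace 𝕜 E] {S U : Set E} (hS : IsBounded S) (hU : U ∈ 𝓝 0)
    {r : 𝕜} (hr : 1 < ‖r‖) : ∃ n : ℕ, S ⊆ r ^ n • U := by
  obtain ⟨R, -, hR⟩ := ((NormedSpace.isVonNBounded_iff 𝕜).2 hS hU).exists_pos
  obtain ⟨n, hn⟩ := pow_unbounded_of_one_lt R hr
  exact ⟨n, hR _ (by rw [norm_pow]; exact hn.le)⟩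

lemma Int.exists_mem_succ_notMem_of_notMem {X : Type*} {S : ℤ → Set X} {x : X} {a b : ℤ}
    (hab : a ≤ b) (ha : x ∉ S a) (hb : x ∈ S b) :
    ∃ k ∈ Ico a b, x ∈ S (k + 1) ∧ x ∉ S k := by
  obtain ⟨l, ⟨hal, hl⟩, hmin⟩ :=
    Int.exists_least_of_bdd (P := fun z => a ≤ z ∧ x ∈ S z) ⟨a, fun _ h => h.1⟩ ⟨b, hab, hb⟩
  have hal' : a < l := lt_of_le_of_ne hal (by rintro rfl; exact ha hl)
  refine ⟨l - 1, ⟨by omega, by linarith [hmin b ⟨hab, hb⟩]⟩, by simpa using hl, fun h => ?_⟩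
  linarith [hmin (l - 1) ⟨by omega, h⟩]

lemma zpow_le_zpow_add_zpow {α : Type*} [Field α] [LinearOrder α] [IsStrictOrderedRing α]
    {t : α} (ht : 0 < t) {a b k : ℤ} (hak : a ≤ k) (hkb : k ≤ b) :
    t ^ k ≤ t ^ a + t ^ b := by
  rcases le_total 1 t with h | h
  · linarith [zpow_le_zpow_right₀ h hkb, zpow_pos ht a]
  · linarith [zpow_le_zpow_right_of_le_one₀ ht h hak, zpow_pos ht b]

section MatrixAction

variable {d : ℕ}

lemma ms_mul (M N : Matrix (Fin d) (Fin d) ℝ) (x : EuclideanSpace ℝ (Fin d)) :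
    ms (M * N) x = ms M (ms N x) := by
  simp [ms, Matrix.mulVec_mulVec]

lemma ms_smul (M : Matrix (Fin d) (Fin d) ℝ) (c : ℝ) (x : EuclideanSpace ℝ (Fin d)) :
    ms M (c • x) = c • ms M x := by
  simp [ms, Matrix.mulVec_smul]

lemma continuous_ms (M : Matrix (Fin d) (Fin d) ℝ) : Continuous (ms M) :=
  (Matrix.toEuclideanCLM (𝕜 := ℝ) M).continuous

lemma image_ms_mul (M N : Matrix (Fin d) (Fin d) ℝ) (s : Set (EuclideanSpace ℝ (Fin d))) :
    ms (M * N) '' s = ms M '' (ms N '' s) := by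
  rw [← image_comp]
  exact image_congr fun x _ => ms_mul M N x

lemma image_ms_smul (M : Matrix (Fin d) (Fin d) ℝ) (c : ℝ) (s : Set (EuclideanSpace ℝ (Fin d))) :
    ms M '' (c • s) = c • ms M '' s :=
  image_smul_comm (ms M) c s (ms_smul M c)

lemma ms_zpow_neg_ms_zpow {A : Matrix (Fin d) (Fin d) ℝ} (hA : IsUnit A.det) (i : ℤ)
    (x : EuclideanSpace ℝ (Fin d)) : ms (A ^ (-i)) (ms (A ^ i) x) = x := by
  rw [← ms_mul, ← Matrix.zpow_add hA, neg_add_cancel, zpow_zero]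
  simp [ms]

lemma mem_image_ms_zpow_add_iff {A : Matrix (Fin d) (Fin d) ℝ} (hA : IsUnit A.det) (i k : ℤ)
    {s : Set (EuclideanSpace ℝ (Fin d))} {x : EuclideanSpace ℝ (Fin d)} :
    ms (A ^ i) x ∈ ms (A ^ (i + k)) '' s ↔ x ∈ ms (A ^ k) '' s := by
  rw [Matrix.zpow_add hA, image_ms_mul]
  exact (Function.LeftInverse.injective (ms_zpow_neg_ms_zpow hA i)).mem_set_image

lemma isBounded_setOf_norm_ms_lt_one {P : Matrix (Fin d) (Fin d) ℝ} (hP : IsUnit P) :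
    IsBounded {x : EuclideanSpace ℝ (Fin d) | ‖ms P x‖ < 1} := by
  have hPdet : IsUnit P.det := (Matrix.isUnit_iff_isUnit_det P).mp hP
  refine isBounded_iff_forall_norm_le.2 ⟨‖Matrix.toEuclideanCLM (𝕜 := ℝ) P⁻¹‖, fun x hx => ?_⟩
  have hx' : ms P⁻¹ (ms P x) = x := by simpa using ms_zpow_neg_ms_zpow hPdet 1 x
  calc ‖x‖ = ‖ms P⁻¹ (ms P x)‖ := by rw [hx']
    _ ≤ ‖Matrix.toEuclideanCLM (𝕜 := ℝ) P⁻¹‖ * 1 :=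
        (ContinuousLinearMap.le_opNorm (Matrix.toEuclideanCLM (𝕜 := ℝ) P⁻¹) (ms P x)).trans
          (by gcongr; exact hx.le)
    _ = _ := mul_one _

lemma setOf_norm_ms_lt_one_mem_nhds_zero (P : Matrix (Fin d) (Fin d) ℝ) :
    {x : EuclideanSpace ℝ (Fin d) | ‖ms P x‖ < 1} ∈ 𝓝 0 :=
  (isOpen_lt (continuous_norm.comp (continuous_ms P)) continuous_const).mem_nhds (by simp [ms])

end MatrixAction

section Dilates

variable {d : ℕ} {A : Matrix (Fin d) (Fin d) ℝ} {Ω : Set (EuclideanSpace ℝ (Fin d))} {r : ℝ}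

lemma pow_smul_subset_image_ms_pow (hΩ : r • Ω ⊆ ms A '' Ω) (n : ℕ) :
    r ^ n • Ω ⊆ ms (A ^ n) '' Ω := by
  induction n with
  | zero => exact fun x hx => ⟨x, by simpa using hx, by simp [ms]⟩
  | succ n ih =>
    calc r ^ (n + 1) • Ω = r ^ n • r • Ω := by rw [pow_succ, mul_smul]
      _ ⊆ r ^ n • ms A '' Ω := smul_set_mono hΩ
      _ = ms A '' (r ^ n • Ω) := (image_ms_smul _ _ _).symm
      _ ⊆ ms A '' (ms (A ^ n) '' Ω) := image_mono ih
      _ = ms (A ^ (n + 1)) '' Ω := by rw [← image_ms_mul, pow_succ']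

lemma image_ms_zpow_neg_subset (hA : IsUnit A.det) (hr : r ≠ 0) (hΩ : r • Ω ⊆ ms A '' Ω)
    (n : ℕ) : ms (A ^ (-(n : ℤ))) '' Ω ⊆ (r ^ n)⁻¹ • Ω := by
  rintro _ ⟨w, hw, rfl⟩
  obtain ⟨v, hv, hvw⟩ := pow_smul_subset_image_ms_pow hΩ n (smul_mem_smul_set hw)
  rw [mem_inv_smul_set_iff₀ (pow_ne_zero n hr), ← ms_smul, ← hvw, ← zpow_natCast,
    ms_zpow_neg_ms_zpow hA]
  exact hv

lemma exists_shell_index_bounds (hA : IsUnit A.det) (hr : 1 < r) (hΩ : r • Ω ⊆ ms A '' Ω)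
    (hΩb : IsBounded Ω) (hΩ0 : Ω ∈ 𝓝 0) {K : Set (EuclideanSpace ℝ (Fin d))}
    (hKb : IsBounded K) (hK0 : Kᶜ ∈ 𝓝 0) :
    ∃ M N : ℕ, ∀ x ∈ K, ∃ k ∈ Ico (-(M : ℤ)) N,
      x ∈ ms (A ^ (k + 1)) '' Ω ∧ x ∉ ms (A ^ k) '' Ω := by
  have hr' : 1 < ‖r‖ := by rwa [Real.norm_of_nonneg (by linarith)]
  obtain ⟨N, hN⟩ := exists_subset_pow_smul hKb hΩ0 hr'
  obtain ⟨M, hM⟩ := exists_subset_pow_smul hΩb hK0 hr'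
  have hrM : r ^ M ≠ 0 := pow_ne_zero M (by linarith)
  refine ⟨M, N, fun x hx => Int.exists_mem_succ_notMem_of_notMem
    (S := fun k => ms (A ^ k) '' Ω) (by omega) (fun hxM => ?_) ?_⟩
  · have hsub : (r ^ M)⁻¹ • Ω ⊆ Kᶜ := by
      rwa [← subset_smul_set_iff₀ hrM]
    exact hsub (image_ms_zpow_neg_subset hA (by linarith) hΩ M hxM) hx
  · simpa using pow_smul_subset_image_ms_pow hΩ N (hN hx)

lemma IsStepQuasiNorm.exists_comparable_zpow {ρ : EuclideanSpace ℝ (Fin d) → ℝ}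
    (hρ : IsStepQuasiNorm A Ω ρ) (hA : IsUnit A.det) (hr : 1 < r) (hΩ : r • Ω ⊆ ms A '' Ω)
    (hΩb : IsBounded Ω) (hΩ0 : Ω ∈ 𝓝 0) {K : Set (EuclideanSpace ℝ (Fin d))}
    (hKb : IsBounded K) (hK0 : Kᶜ ∈ 𝓝 0) :
    ∃ C > 0, ∀ x ∈ K, ∀ i : ℤ,
      |A.det| ^ i ≤ C * ρ (ms (A ^ i) x) ∧ ρ (ms (A ^ i) x) ≤ C * |A.det| ^ i := by
  set t := |A.det|
  have ht : 0 < t := abs_pos.mpr hA.ne_zero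
  obtain ⟨M, N, hshell⟩ := exists_shell_index_bounds hA hr hΩ hΩb hΩ0 hKb hK0
  set C := t ^ (-(M : ℤ)) + t ^ (N : ℤ) + (t ^ (-(N : ℤ)) + t ^ (M : ℤ))
  have hpos (n : ℤ) : 0 < t ^ n := zpow_pos ht n
  refine ⟨C, by positivity, fun x hx i => ?_⟩
  obtain ⟨k, ⟨hMk, hkN⟩, hk1, hk⟩ := hshell x hx
  have hρx : ρ (ms (A ^ i) x) = t ^ i * t ^ k := by
    rw [← zpow_add₀ ht.ne']
    refine hρ.2 (i + k) _ ⟨?_, ?_⟩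
    · rwa [add_assoc, mem_image_ms_zpow_add_iff hA]
    · rwa [mem_image_ms_zpow_add_iff hA]
  have hk_le : t ^ k ≤ C := by
    linarith [zpow_le_zpow_add_zpow ht hMk hkN.le, hpos (-(N : ℤ)), hpos M]
  have hnegk_le : t ^ (-k) ≤ C := by
    have := zpow_le_zpow_add_zpow ht (neg_le_neg hkN.le) (neg_le_neg hMk)
    rw [neg_neg] at this
    linarith [hpos (-(M : ℤ)), hpos N]
  rw [hρx]
  constructor
  · calc t ^ i = t ^ i * t ^ k * t ^ (-k) := by
          rw [mul_assoc, ← zpow_add₀ ht.ne', add_neg_cancel, zpow_zero, mul_one]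
      _ ≤ t ^ i * t ^ k * C := by have := hpos i; have := hpos k; gcongr
      _ = C * (t ^ i * t ^ k) := mul_comm _ _
  · calc t ^ i * t ^ k ≤ t ^ i * C := by have := hpos i; gcongr
      _ = C * t ^ i := mul_comm _ _

lemma IsStepQuasiNorm.exists_comparable_zpow_of_isExpansiveEllipsoid
    {ρ : EuclideanSpace ℝ (Fin d) → ℝ} (hρ : IsStepQuasiNorm A Ω ρ) (hA : IsUnit A)
    (hΩ : IsExpansiveEllipsoid A Ω) {K : Set (EuclideanSpace ℝ (Fin d))}
    (hKc : IsCompact (closure K)) (hK0 : 0 ∉ closure K) :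
    ∃ C > 0, ∀ x ∈ K, ∀ i : ℤ,
      |A.det| ^ i ≤ C * ρ (ms (A ^ i) x) ∧ ρ (ms (A ^ i) x) ≤ C * |A.det| ^ i := by
  obtain ⟨⟨P, hP, rfl⟩, -, r, hr, -, hrΩ⟩ := hΩ
  exact hρ.exists_comparable_zpow ((Matrix.isUnit_iff_isUnit_det A).mp hA) hr hrΩ
    (isBounded_setOf_norm_ms_lt_one hP) (setOf_norm_ms_lt_one_mem_nhds_zero P)
    (hKc.isBounded.subset subset_closure)
    (Filter.mem_of_superset (isClosed_closure.compl_mem_nhds hK0)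
      (compl_subset_compl.2 subset_closure))

end Dilates

theorem stmt4_general {d : ℕ} (A B : Matrix (Fin d) (Fin d) ℝ)
    (hA : Expansive A) (hB : Expansive B)
    (ΩA ΩB : Set (EuclideanSpace ℝ (Fin d)))
    (hΩA : IsExpansiveEllipsoid A ΩA) (hΩB : IsExpansiveEllipsoid B ΩB)
    (ρA ρB : EuclideanSpace ℝ (Fin d) → ℝ)
    (hρA : IsStepQuasiNorm A ΩA ρA) (hρB : IsStepQuasiNorm B ΩB ρB)
    (C₀ : ℝ) (hC₀ : 1 ≤ C₀) (hequiv : ∀ x, (1 / C₀) * ρA x ≤ ρB x ∧ ρB x ≤ C₀ * ρA x)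
    (Q P : Set (EuclideanSpace ℝ (Fin d)))
    (hQc : IsCompact (closure Q)) (hPc : IsCompact (closure P))
    (hQ0 : (0 : EuclideanSpace ℝ (Fin d)) ∉ closure Q)
    (hP0 : (0 : EuclideanSpace ℝ (Fin d)) ∉ closure P) :
    ∃ C : ℝ, 0 < C ∧ ∀ i j : ℤ,
      (ms (A ^ i) '' Q ∩ ms (B ^ j) '' P).Nonempty →
        (1 / C) * |B.det| ^ j ≤ |A.det| ^ i ∧ |A.det| ^ i ≤ C * |B.det| ^ j := by
  obtain ⟨CA, hCA, hρA_cmp⟩ :=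
    hρA.exists_comparable_zpow_of_isExpansiveEllipsoid hA.1 hΩA hQc hQ0
  obtain ⟨CB, hCB, hρB_cmp⟩ :=
    hρB.exists_comparable_zpow_of_isExpansiveEllipsoid hB.1 hΩB hPc hP0
  have hC₀pos : 0 < C₀ := by linarith
  refine ⟨CA * C₀ * CB, by positivity, ?_⟩
  rintro i j ⟨x, ⟨q, hq, rfl⟩, p, hp, hpx⟩
  obtain ⟨hA₁, hA₂⟩ := hρA_cmp q hq i
  obtain ⟨hB₁, hB₂⟩ := hρB_cmp p hp j
  rw [hpx] at hB₁ hB₂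
  obtain ⟨hAB, hBA⟩ := hequiv (ms (A ^ i) q)
  rw [one_div_mul_eq_div, div_le_iff₀' hC₀pos] at hAB
  constructor
  · rw [one_div_mul_eq_div, div_le_iff₀' (by positivity)]
    calc |B.det| ^ j ≤ CB * (C₀ * (CA * |A.det| ^ i)) :=
          hB₁.trans (by gcongr; exact hBA.trans (mul_le_mul_of_nonneg_left hA₂ hC₀pos.le))
      _ = _ := by ring
  · calc |A.det| ^ i ≤ CA * (C₀ * (CB * |B.det| ^ j)) :=
          hA₁.trans (by gcongr; exact hAB.trans (mul_le_mul_of_nonneg_left hB₂ hC₀pos.le))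
      _ = _ := by ring

/-- If the step quasi-norms of expansive `A, B` are equivalent, then `|det A|^i ≍ |det B|^j`
whenever `A^i Q ∩ B^j P ≠ ∅`, for `Q, P` open with compact closure in `ℝ^d \ {0}`. -/
theorem stmt4 {d : ℕ} (A B : Matrix (Fin d) (Fin d) ℝ)
    (hA : Expansive A) (hB : Expansive B)
    (ΩA ΩB : Set (EuclideanSpace ℝ (Fin d)))
    (hΩA : IsExpansiveEllipsoid A ΩA) (hΩB : IsExpansiveEllipsoid B ΩB)
    (ρA ρB : EuclideanSpace ℝ (Fin d) → ℝ)
    (hρA : IsStepQuasiNorm A ΩA ρA) (hρB : IsStepQuasiNorm B ΩB ρB)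
    (C₀ : ℝ) (hC₀ : 1 ≤ C₀) (hequiv : ∀ x, (1 / C₀) * ρA x ≤ ρB x ∧ ρB x ≤ C₀ * ρA x)
    (Q P : Set (EuclideanSpace ℝ (Fin d))) (hQo : IsOpen Q) (hPo : IsOpen P)
    (hQc : IsCompact (closure Q)) (hPc : IsCompact (closure P))
    (hQ0 : (0 : EuclideanSpace ℝ (Fin d)) ∉ closure Q)
    (hP0 : (0 : EuclideanSpace ℝ (Fin d)) ∉ closure P) :
    ∃ C : ℝ, 0 < C ∧ ∀ i j : ℤ,
      (ms (A ^ i) '' Q ∩ ms (B ^ j) '' P).Nonempty →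
        (1 / C) * |B.det| ^ j ≤ |A.det| ^ i ∧ |A.det| ^ i ≤ C * |B.det| ^ j :=
  stmt4_general A B hA hB ΩA ΩB hΩA hΩB ρA ρB hρA hρB C₀ hC₀ hequiv Q P hQc hPc hQ0 hP0
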